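/- Let 𝒢 and ℋ be two DAGs with the same skeleton G, and suppose that G is a tree. If the pair {𝒢, ℋ} is a shift or a split, then conv(c_𝒢, c_ℋ) is an edge of CIM_G. -/

import Mathlib

open Classical

/-- A DAG on vertex type `V`: a directed graph (adjacency relation) with no directed cycles. -/
structure DAG (V : Type) where
  adj : V → V → Prop
  acyclic : ∀ v, ¬ Relation.TransGen adj v v

namespace DAG

variable {V : Type}

/-- The skeleton of a DAG: the undirected graph obtained by forgetting directions. -/
def skeleton (D : DAG V) : SimpleGraph V where
  Adj i j := D.adj i j ∨ D.adj j i
  symm := by constructor; intro i j h; exact h.symm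
  loopless := by
    constructor
    intro i h
    rcases h with h | h <;> exact D.acyclic i (Relation.TransGen.single h)

/-- The characteristic imset of a DAG, as a vector indexed by finite vertex sets
(coordinates on sets of size `< 2` are identically zero). -/
noncomputable def imset (D : DAG V) (S : Finset V) : ℝ :=
  if 2 ≤ S.card ∧ ∃ i ∈ S, ∀ j ∈ S, j ≠ i → D.adj j i then 1 else 0

/-- `D.IsVStructure i j k` means `i → j ← k` is an induced subgraph of `D`
(`i` and `k` non-adjacent). -/
def IsVStructure (D : DAG V) (i j k : V) : Prop :=
  i ≠ k ∧ D.adj i j ∧ D.adj k j ∧ ¬ D.adj i k ∧ ¬ D.adj k i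

end DAG

/-- Two DAGs are Markov equivalent iff they have the same skeleton and the same
v-structures. -/
def MarkovEquiv {V : Type} (D E : DAG V) : Prop :=
  D.skeleton = E.skeleton ∧ ∀ i j k, D.IsVStructure i j k ↔ E.IsVStructure i j k

/-- An arrow `i → j` of `D` is essential if it occurs in every DAG Markov equivalent to `D`. -/
def DAG.Essential {V : Type} (D : DAG V) (i j : V) : Prop :=
  D.adj i j ∧ ∀ E : DAG V, MarkovEquiv D E → E.adj i j

/-- The characteristic imset polytope of an undirected graph `G`: the convex hull of the
characteristic imsets of all DAGs with skeleton `G`. -/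
noncomputable def CIM {V : Type} (G : SimpleGraph V) : Set (Finset V → ℝ) :=
  convexHull ℝ { f | ∃ D : DAG V, D.skeleton = G ∧ f = D.imset }

/-- `conv(u,v)` is an edge (one-dimensional face) of `P`: there is a linear functional whose
maximum over `P` is attained exactly on the segment from `u` to `v`. -/
def IsPolytopeEdge {E : Type*} [AddCommGroup E] [Module ℝ E] (P : Set E) (u v : E) : Prop :=
  u ≠ v ∧ ∃ φ : E →ₗ[ℝ] ℝ, (∀ x ∈ P, φ x ≤ φ u) ∧ ∀ x ∈ P, (φ x = φ u ↔ x ∈ segment ℝ u v)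

/-- `P` is a simplex of dimension `d`: the convex hull of `d+1` affinely independent points. -/
def IsSimplexOfDim {E : Type*} [AddCommGroup E] [Module ℝ E] (P : Set E) (d : ℕ) : Prop :=
  ∃ pts : Fin (d + 1) → E, AffineIndependent ℝ pts ∧ P = convexHull ℝ (Set.range pts)

/-- The standard basis vector indexed by `S`. -/
noncomputable def eVec {V : Type} (S : Finset V) : Finset V → ℝ :=
  fun T => if T = S then 1 else 0

/-- The pair `(D, E)` is a *shift*: there is a path `⟨i₀, …, i_{2m+1}⟩` in the skeleton such
that `c_E - ∑_{j odd} e_{{i_{j-1}, i_j, i_{j+1}}} = c_D - ∑_{j even} e_{{i_{j-1}, i_j, i_{j+1}}}`,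
with odd `j ∈ {1, 3, …, 2m-1}` and even `j ∈ {2, 4, …, 2m}`. -/
def IsShift {V : Type} (D E : DAG V) : Prop :=
  ∃ m : ℕ, 1 ≤ m ∧ ∃ π : ℕ → V,
    Set.InjOn π (Set.Iic (2 * m + 1)) ∧
    (∀ k < 2 * m + 1, D.skeleton.Adj (π k) (π (k + 1))) ∧
    E.imset - (∑ t ∈ Finset.range m, eVec ({π (2 * t), π (2 * t + 1), π (2 * t + 2)} : Finset V)) =
      D.imset - (∑ t ∈ Finset.range m, eVec ({π (2 * t + 1), π (2 * t + 2), π (2 * t + 3)} : Finset V))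

/-- The pair `(D, E)` is a *split*: there is a path `⟨i₀, …, i_{2m}⟩` in the skeleton such
that `c_E - ∑_{j odd} e_{{i_{j-1}, i_j, i_{j+1}}} = c_D - ∑_{j even} e_{{i_{j-1}, i_j, i_{j+1}}}`,
with odd `j ∈ {1, 3, …, 2m-1}` and even `j ∈ {2, 4, …, 2m-2}`. -/
def IsSplit {V : Type} (D E : DAG V) : Prop :=
  ∃ m : ℕ, 1 ≤ m ∧ ∃ π : ℕ → V,
    Set.InjOn π (Set.Iic (2 * m)) ∧
    (∀ k < 2 * m, D.skeleton.Adj (π k) (π (k + 1))) ∧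
    E.imset - (∑ t ∈ Finset.range m, eVec ({π (2 * t), π (2 * t + 1), π (2 * t + 2)} : Finset V)) =
      D.imset - (∑ t ∈ Finset.range (m - 1), eVec ({π (2 * t + 1), π (2 * t + 2), π (2 * t + 3)} : Finset V))

/-!
Index the triples of the path by their first vertex, `T_k = {π k, π (k+1), π (k+2)}`.
A shift or split says that `c_D` and `c_E` agree off the triples, while on them `c_D` is the
indicator of odd `k` and `c_E` that of even `k`. In a tree, `c_A(T_k) = 1` forces the collider
`π k → π (k+1) ← π (k+2)`, so no imset contains two consecutive triples. Hence
`∑_{k<N} (c(T_k) + c(T_{k+1}))` is at most `N` on the vertices of `CIM_G`, with equality exactly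
for the two alternating patterns; adding `±c(S)` off the triples (sign `+` iff `c_D(S) = 1`)
gives a linear functional whose maximum over the vertices is attained only at `c_D` and `c_E`.
-/

open Finset

theorem IsPolytopeEdge.symm {E : Type*} [AddCommGroup E] [Module ℝ E] {P : Set E} {u v : E}
    (h : IsPolytopeEdge P u v) (hv : v ∈ P) : IsPolytopeEdge P v u := by
  obtain ⟨huv, φ, hle, hface⟩ := h
  have hφv : φ v = φ u := (hface v hv).2 (right_mem_segment ℝ u v)
  refine ⟨huv.symm, φ, fun x hx => hφv ▸ hle x hx, fun x hx => ?_⟩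
  rw [hφv, segment_symm]
  exact hface x hx

theorem isPolytopeEdge_convexHull {E : Type*} [AddCommGroup E] [Module ℝ E] {s : Set E}
    {u v : E} (huv : u ≠ v) (φ : E →ₗ[ℝ] ℝ) (hφv : φ v = φ u) (hle : ∀ x ∈ s, φ x ≤ φ u)
    (hmax : ∀ x ∈ s, φ x = φ u → x = u ∨ x = v) : IsPolytopeEdge (convexHull ℝ s) u v := by
  refine ⟨huv, φ, fun x hx => convexHull_min hle (convex_halfSpace_le φ.isLinear _) hx,
    fun x hx => ⟨fun hxφ => ?_, ?_⟩⟩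
  · obtain ⟨ι, _, w, z, hw₀, hw₁, hz, rfl⟩ := mem_convexHull_iff_exists_fintype.1 hx
    have hterm : ∀ i, w i * (φ u - φ (z i)) = 0 := by
      intro i
      refine (sum_eq_zero_iff_of_nonneg fun i _ =>
        mul_nonneg (hw₀ i) (sub_nonneg.2 (hle _ (hz i)))).1 ?_ i (mem_univ i)
      simp only [map_sum, map_smul, smul_eq_mul] at hxφ
      simp only [mul_sub, sum_sub_distrib, ← sum_mul, hw₁, one_mul, hxφ, sub_self]
    have hzuv : ∀ i, w i ≠ 0 → z i ∈ ({u, v} : Set E) := fun i hwi =>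
      hmax _ (hz i) (by linarith [(mul_eq_zero.1 (hterm i)).resolve_left hwi])
    rw [← Fintype.sum_subset (s := {i | w i ≠ 0})
      fun i hi => mem_filter.2 ⟨mem_univ _, left_ne_zero_of_smul hi⟩, ← convexHull_pair]
    exact (convex_convexHull ..).sum_mem (fun i _ => hw₀ i) (by rwa [sum_filter_ne_zero])
      fun i hi => subset_convexHull _ _ (hzuv i (mem_filter.1 hi).2)
  · rintro ⟨a, b, -, -, hab, rfl⟩
    rw [map_add, map_smul, map_smul, hφv, smul_eq_mul, smul_eq_mul, ← add_mul, hab, one_mul]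

lemma eq_ite_odd_or_eq_ite_even {a : ℕ → ℝ} {N : ℕ} (h₀ : a 0 = 0 ∨ a 0 = 1)
    (h : ∀ k < N, a k + a (k + 1) = 1) :
    (∀ k ≤ N, a k = if Odd k then 1 else 0) ∨ (∀ k ≤ N, a k = if Even k then 1 else 0) := by
  have step : ∀ k < N, a (k + 1) = 1 - a k := fun k hk => by linarith [h k hk]
  rcases h₀ with h₀ | h₀ <;> [left; right] <;> intro k hk <;> induction k with
    | zero => simpa using h₀
    | succ k ih =>
      rw [step k (by omega), ih (by omega)]
      by_cases hk : Even k <;>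
        simp [hk, Nat.odd_add_one, Nat.even_add_one, ← Nat.not_even_iff_odd]

lemma two_mul_sub_one_mul_le {c d : ℝ} (hc : c = 0 ∨ c = 1) (hd : d = 0 ∨ d = 1) :
    (2 * d - 1) * c ≤ d := by
  rcases hc with rfl | rfl <;> rcases hd with rfl | rfl <;> norm_num

lemma eq_of_two_mul_sub_one_mul_eq {c d : ℝ} (hc : c = 0 ∨ c = 1) (hd : d = 0 ∨ d = 1)
    (h : (2 * d - 1) * c = d) : c = d := by
  rcases hc with rfl | rfl <;> rcases hd with rfl | rfl <;> linarith

namespace DAG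

variable {V : Type}

lemma imset_eq_zero_or_one (A : DAG V) (S : Finset V) : A.imset S = 0 ∨ A.imset S = 1 := by
  unfold imset
  split_ifs <;> simp

lemma adj_of_imset_eq_one {G : SimpleGraph V} (hG : G.IsAcyclic) {A : DAG V}
    (hA : A.skeleton = G) {a b c : V} (hab : G.Adj a b) (hbc : G.Adj b c) (hac : a ≠ c)
    (h : A.imset {a, b, c} = 1) : A.adj a b ∧ A.adj c b := by
  have hnac : ¬ G.Adj a c := fun hac' =>
    hG.cliqueFree le_rfl {a, b, c} (SimpleGraph.is3Clique_triple_iff.2 ⟨hab, hac', hbc⟩)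
  have hskel : ∀ x y, A.adj x y → G.Adj x y := fun x y hxy => hA ▸ Or.inl hxy
  obtain ⟨i, hi, hpar⟩ : ∃ i ∈ ({a, b, c} : Finset V), ∀ j ∈ ({a, b, c} : Finset V),
      j ≠ i → A.adj j i := by
    unfold imset at h
    split_ifs at h with hS
    exacts [hS.2, absurd h zero_ne_one]
  simp only [mem_insert, mem_singleton] at hi
  rcases hi with rfl | rfl | rfl
  · exact absurd (hskel _ _ (hpar c (by simp) hac.symm)).symm hnac
  · exact ⟨hpar a (by simp) hab.ne, hpar c (by simp) hbc.ne'⟩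
  · exact absurd (hskel _ _ (hpar a (by simp) hac)) hnac

end DAG

open DAG

variable {V : Type}

noncomputable def triple (π : ℕ → V) (k : ℕ) : Finset V := {π k, π (k + 1), π (k + 2)}

section Path

variable {π : ℕ → V} {N : ℕ}

lemma triple_injOn (hπ : Set.InjOn π (Set.Iic (N + 2))) {k l : ℕ} (hk : k ≤ N) (hl : l ≤ N)
    (h : triple π k = triple π l) : k = l := by
  have hπ' : ∀ a b, a ≤ N + 2 → b ≤ N + 2 → π a = π b → a = b := fun a b ha hb =>
    @hπ a ha b hb
  have hkl : π k ∈ triple π l := h ▸ by simp [triple]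
  have hlk : π l ∈ triple π k := h ▸ by simp [triple]
  simp only [triple, mem_insert, mem_singleton] at hkl hlk
  rcases hkl with e | e | e <;> have := hπ' _ _ (by omega) (by omega) e <;>
    rcases hlk with e' | e' | e' <;> have := hπ' _ _ (by omega) (by omega) e' <;> omega

lemma adj_of_imset_triple_eq_one {G : SimpleGraph V} (hG : G.IsAcyclic) {A : DAG V}
    (hA : A.skeleton = G) (hπ : Set.InjOn π (Set.Iic (N + 2)))
    (hadj : ∀ k < N + 2, G.Adj (π k) (π (k + 1))) {k : ℕ} (hk : k ≤ N)
    (h : A.imset (triple π k) = 1) : A.adj (π k) (π (k + 1)) ∧ A.adj (π (k + 2)) (π (k + 1)) :=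
  adj_of_imset_eq_one hG hA (hadj k (by omega)) (hadj (k + 1) (by omega))
    (fun e => by have := hπ (Set.mem_Iic.2 (by omega)) (Set.mem_Iic.2 (by omega)) e; omega) h

/-- Consecutive triples cannot both be colliders: they would orient `π (k+1) π (k+2)` both ways. -/
lemma imset_triple_add_imset_triple_succ_le_one {G : SimpleGraph V} (hG : G.IsAcyclic)
    {A : DAG V} (hA : A.skeleton = G) (hπ : Set.InjOn π (Set.Iic (N + 2)))
    (hadj : ∀ k < N + 2, G.Adj (π k) (π (k + 1))) {k : ℕ} (hk : k < N) :
    A.imset (triple π k) + A.imset (triple π (k + 1)) ≤ 1 := by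
  rcases A.imset_eq_zero_or_one (triple π k) with h | h
  · rcases A.imset_eq_zero_or_one (triple π (k + 1)) with h' | h' <;> linarith
  rcases A.imset_eq_zero_or_one (triple π (k + 1)) with h' | h'
  · linarith
  exact absurd (Relation.TransGen.head
    (adj_of_imset_triple_eq_one hG hA hπ hadj hk.le h).2
    (.single (adj_of_imset_triple_eq_one hG hA hπ hadj hk h').1)) (A.acyclic _)

end Path

/-- The common shape of shifts (`N` odd) and splits (`N` even), with the triples of the path
`π 0, …, π (N+2)` indexed by their first vertex. -/
def IsFlipAlong (D E : DAG V) (π : ℕ → V) (N : ℕ) : Prop :=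
  Set.InjOn π (Set.Iic (N + 2)) ∧ (∀ k < N + 2, D.skeleton.Adj (π k) (π (k + 1))) ∧
    E.imset - ∑ k ∈ (range (N + 1)).filter Even, eVec (triple π k) =
      D.imset - ∑ k ∈ (range (N + 1)).filter Odd, eVec (triple π k)

lemma sum_range_filter_even {M : Type*} [AddCommMonoid M] (f : ℕ → M) (n : ℕ) :
    ∑ k ∈ (range n).filter Even, f k = ∑ t ∈ range ((n + 1) / 2), f (2 * t) := by
  rw [← sum_image fun a _ b _ (h : 2 * a = 2 * b) => by omega]
  congr 1
  ext k
  simp only [mem_filter, mem_range, mem_image, Nat.even_iff]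
  exact ⟨fun ⟨hk, he⟩ => ⟨k / 2, by omega, by omega⟩, by rintro ⟨t, ht, rfl⟩; omega⟩

lemma sum_range_filter_odd {M : Type*} [AddCommMonoid M] (f : ℕ → M) (n : ℕ) :
    ∑ k ∈ (range n).filter Odd, f k = ∑ t ∈ range (n / 2), f (2 * t + 1) := by
  rw [← sum_image fun a _ b _ (h : 2 * a + 1 = 2 * b + 1) => by omega]
  congr 1
  ext k
  simp only [mem_filter, mem_range, mem_image, Nat.odd_iff]
  exact ⟨fun ⟨hk, ho⟩ => ⟨k / 2, by omega, by omega⟩, by rintro ⟨t, ht, rfl⟩; omega⟩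

lemma IsShift.exists_isFlipAlong {D E : DAG V} (h : IsShift D E) :
    ∃ π N, IsFlipAlong D E π N := by
  obtain ⟨m, hm, π, hπ, hadj, heq⟩ := h
  have hN : 2 * m - 1 + 2 = 2 * m + 1 := by omega
  refine ⟨π, 2 * m - 1, hN ▸ hπ, hN ▸ hadj, ?_⟩
  rwa [sum_range_filter_even, sum_range_filter_odd, show (2 * m - 1 + 1 + 1) / 2 = m by omega,
    show (2 * m - 1 + 1) / 2 = m by omega]

lemma IsSplit.exists_isFlipAlong {D E : DAG V} (h : IsSplit D E) :
    ∃ π N, IsFlipAlong D E π N := by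
  obtain ⟨m, hm, π, hπ, hadj, heq⟩ := h
  have hN : 2 * m - 2 + 2 = 2 * m := by omega
  refine ⟨π, 2 * m - 2, hN ▸ hπ, hN ▸ hadj, ?_⟩
  rwa [sum_range_filter_even, sum_range_filter_odd, show (2 * m - 2 + 1 + 1) / 2 = m by omega,
    show (2 * m - 2 + 1) / 2 = m - 1 by omega]

section Flip

variable {D E : DAG V} {π : ℕ → V} {N : ℕ}

lemma sum_eVec_triple_apply_triple (hπ : Set.InjOn π (Set.Iic (N + 2))) (p : ℕ → Prop)
    [DecidablePred p] {j : ℕ} (hj : j ≤ N) :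
    (∑ k ∈ (range (N + 1)).filter p, eVec (triple π k)) (triple π j) = if p j then 1 else 0 := by
  rw [Finset.sum_apply, sum_filter, sum_eq_single j]
  · simp [eVec]
  · intro k hk hkj
    have hk' : k ≤ N := Nat.lt_succ_iff.1 (mem_range.1 hk)
    have hne : triple π j ≠ triple π k := fun e => hkj (triple_injOn hπ hk' hj e.symm)
    simp [eVec, hne]
  · exact fun hj' => absurd (mem_range.2 (by omega)) hj'

lemma IsFlipAlong.imset_triple (hf : IsFlipAlong D E π N) {k : ℕ} (hk : k ≤ N) :
    D.imset (triple π k) = (if Odd k then 1 else 0) ∧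
      E.imset (triple π k) = if Even k then 1 else 0 := by
  have h := congrFun hf.2.2 (triple π k)
  simp only [Pi.sub_apply, sum_eVec_triple_apply_triple hf.1 _ hk] at h
  have hD := D.imset_eq_zero_or_one (triple π k)
  have hE := E.imset_eq_zero_or_one (triple π k)
  rcases Nat.even_or_odd k with hk' | hk'
  · rw [if_pos hk', if_neg (Nat.not_odd_iff_even.2 hk')] at h ⊢
    constructor <;> rcases hD with hD | hD <;> rcases hE with hE | hE <;> linarith
  · rw [if_neg (Nat.not_even_iff_odd.2 hk'), if_pos hk'] at h ⊢
    constructor <;> rcases hD with hD | hD <;> rcases hE with hE | hE <;> linarith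

variable [Fintype V]

noncomputable def offTriples (π : ℕ → V) (N : ℕ) : Finset (Finset V) :=
  univ \ (range (N + 1)).image (triple π)

lemma mem_offTriples {S : Finset V} : S ∈ offTriples π N ↔ ∀ k ≤ N, triple π k ≠ S := by
  simp [offTriples]

lemma IsFlipAlong.imset_eq_of_mem_offTriples (hf : IsFlipAlong D E π N) {S : Finset V}
    (hS : S ∈ offTriples π N) : E.imset S = D.imset S := by
  have hzero : ∀ p : ℕ → Prop, [DecidablePred p] →
      (∑ k ∈ (range (N + 1)).filter p, eVec (triple π k)) S = 0 := fun p _ => by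
    refine (Finset.sum_apply _ _ _).trans (sum_eq_zero fun k hk => if_neg fun e => ?_)
    exact mem_offTriples.1 hS k (Nat.lt_succ_iff.1 (mem_range.1 (mem_filter.1 hk).1)) e.symm
  simpa [hzero] using congrFun hf.2.2 S

variable (D π N) in
/-- The weight of `T_k` is its degree in the path `T_0 - ⋯ - T_N`. -/
noncomputable def flipFunctional : (Finset V → ℝ) →ₗ[ℝ] ℝ where
  toFun c := ∑ k ∈ range N, (c (triple π k) + c (triple π (k + 1))) +
    ∑ S ∈ offTriples π N, (2 * D.imset S - 1) * c S
  map_add' c c' := by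
    simp only [Pi.add_apply, mul_add, sum_add_distrib]
    ring
  map_smul' r c := by
    simp only [Pi.smul_apply, smul_eq_mul, RingHom.id_apply, mul_add, mul_sum]
    congr 1
    exact sum_congr rfl fun _ _ => by ring

lemma flipFunctional_apply (c : Finset V → ℝ) : flipFunctional D π N c =
    ∑ k ∈ range N, (c (triple π k) + c (triple π (k + 1))) +
      ∑ S ∈ offTriples π N, (2 * D.imset S - 1) * c S := rfl

lemma flipFunctional_imset_le {G : SimpleGraph V} (hG : G.IsAcyclic) {A : DAG V}
    (hA : A.skeleton = G) (hπ : Set.InjOn π (Set.Iic (N + 2)))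
    (hadj : ∀ k < N + 2, G.Adj (π k) (π (k + 1))) :
    flipFunctional D π N A.imset ≤ N + ∑ S ∈ offTriples π N, D.imset S := by
  have hpairs := sum_le_sum fun k hk =>
    imset_triple_add_imset_triple_succ_le_one hG hA hπ hadj (mem_range.1 hk)
  have hsigns := sum_le_sum fun S (_ : S ∈ offTriples π N) =>
    two_mul_sub_one_mul_le (A.imset_eq_zero_or_one S) (D.imset_eq_zero_or_one S)
  simp only [sum_const, card_range, nsmul_eq_mul, mul_one] at hpairs
  rw [flipFunctional_apply]
  linarith

lemma eq_of_flipFunctional_imset_eq {G : SimpleGraph V} (hG : G.IsAcyclic) {A : DAG V}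
    (hA : A.skeleton = G) (hπ : Set.InjOn π (Set.Iic (N + 2)))
    (hadj : ∀ k < N + 2, G.Adj (π k) (π (k + 1)))
    (h : flipFunctional D π N A.imset = N + ∑ S ∈ offTriples π N, D.imset S) :
    (∀ k < N, A.imset (triple π k) + A.imset (triple π (k + 1)) = 1) ∧
      ∀ S ∈ offTriples π N, A.imset S = D.imset S := by
  have hpair := fun k (hk : k ∈ range N) =>
    imset_triple_add_imset_triple_succ_le_one hG hA hπ hadj (mem_range.1 hk)
  have hsign := fun S (_ : S ∈ offTriples π N) =>
    two_mul_sub_one_mul_le (A.imset_eq_zero_or_one S) (D.imset_eq_zero_or_one S)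
  have hpairs := sum_le_sum hpair
  have hsigns := sum_le_sum hsign
  simp only [sum_const, card_range, nsmul_eq_mul, mul_one] at hpairs
  rw [flipFunctional_apply] at h
  refine ⟨fun k hk => (sum_eq_sum_iff_of_le hpair).1 ?_ k (mem_range.2 hk), fun S hS =>
    eq_of_two_mul_sub_one_mul_eq (A.imset_eq_zero_or_one S) (D.imset_eq_zero_or_one S)
      ((sum_eq_sum_iff_of_le hsign).1 (by linarith) S hS)⟩
  simp only [sum_const, card_range, nsmul_eq_mul, mul_one]
  linarith

lemma flipFunctional_imset_of_alternating {B : DAG V}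
    (hpair : ∀ k < N, B.imset (triple π k) + B.imset (triple π (k + 1)) = 1)
    (hoff : ∀ S ∈ offTriples π N, B.imset S = D.imset S) :
    flipFunctional D π N B.imset = N + ∑ S ∈ offTriples π N, D.imset S := by
  have hsigns : ∑ S ∈ offTriples π N, (2 * D.imset S - 1) * B.imset S =
      ∑ S ∈ offTriples π N, D.imset S := sum_congr rfl fun S hS => by
    rw [hoff S hS]
    rcases D.imset_eq_zero_or_one S with h | h <;> norm_num [h]
  rw [flipFunctional_apply, hsigns, sum_congr rfl fun k hk => hpair k (mem_range.1 hk)]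
  simp

lemma eq_of_forall_triple_eq {f g : Finset V → ℝ}
    (htri : ∀ k ≤ N, f (triple π k) = g (triple π k))
    (hoff : ∀ S ∈ offTriples π N, f S = g S) : f = g := by
  funext S
  by_cases hS : S ∈ offTriples π N
  · exact hoff S hS
  · obtain ⟨k, hk, rfl⟩ : ∃ k ≤ N, triple π k = S := by simpa [mem_offTriples] using hS
    exact htri k hk

theorem IsFlipAlong.isPolytopeEdge {G : SimpleGraph V} (hG : G.IsAcyclic) (hD : D.skeleton = G)
    (hf : IsFlipAlong D E π N) : IsPolytopeEdge (CIM G) D.imset E.imset := by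
  have hπ := hf.1
  have hadj : ∀ k < N + 2, G.Adj (π k) (π (k + 1)) := hD ▸ hf.2.1
  have hDT k (hk : k ≤ N) := (hf.imset_triple hk).1
  have hET k (hk : k ≤ N) := (hf.imset_triple hk).2
  have hφD : flipFunctional D π N D.imset = N + ∑ S ∈ offTriples π N, D.imset S :=
    flipFunctional_imset_of_alternating (fun k hk => by
      rw [hDT k hk.le, hDT (k + 1) hk]
      by_cases h : Even k <;> simp [h, Nat.odd_add_one, ← Nat.not_even_iff_odd]) fun _ _ => rfl
  have hφE : flipFunctional D π N E.imset = N + ∑ S ∈ offTriples π N, D.imset S :=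
    flipFunctional_imset_of_alternating (fun k hk => by
      rw [hET k hk.le, hET (k + 1) hk]
      by_cases h : Even k <;> simp [h, Nat.even_add_one])
      fun _ hS => hf.imset_eq_of_mem_offTriples hS
  refine isPolytopeEdge_convexHull (fun e => by simpa [e, hET 0] using hDT 0 (Nat.zero_le _))
    (flipFunctional D π N) (hφE.trans hφD.symm) ?_ ?_
  · rintro _ ⟨A, hA, rfl⟩
    exact hφD ▸ flipFunctional_imset_le hG hA hπ hadj
  · rintro _ ⟨A, hA, rfl⟩ hAφ
    obtain ⟨hpair, hoff⟩ := eq_of_flipFunctional_imset_eq hG hA hπ hadj (hAφ.trans hφD)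
    rcases eq_ite_odd_or_eq_ite_even (A.imset_eq_zero_or_one _) hpair with hodd | heven
    · exact .inl (eq_of_forall_triple_eq (fun k hk => (hodd k hk).trans (hDT k hk).symm) hoff)
    · exact .inr (eq_of_forall_triple_eq (fun k hk => (heven k hk).trans (hET k hk).symm)
        fun S hS => (hoff S hS).trans (hf.imset_eq_of_mem_offTriples hS).symm)

end Flip

/-- **Shifts and splits are edges.**  Let `D` and `E` be DAGs with common skeleton `G`, a
tree.  If the pair `{D, E}` is a shift or a split, then `conv(c_D, c_E)` is an edge of
`CIM_G`. -/
theorem shift_or_split_is_edge {p : ℕ} (G : SimpleGraph (Fin p)) (htree : G.IsTree)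
    (D E : DAG (Fin p)) (hD : D.skeleton = G) (hE : E.skeleton = G)
    (h : IsShift D E ∨ IsShift E D ∨ IsSplit D E ∨ IsSplit E D) :
    IsPolytopeEdge (CIM G) D.imset E.imset := by
  have hflip : (∃ π N, IsFlipAlong D E π N) ∨ ∃ π N, IsFlipAlong E D π N := by
    rcases h with h | h | h | h
    exacts [.inl h.exists_isFlipAlong, .inr h.exists_isFlipAlong, .inl h.exists_isFlipAlong,
      .inr h.exists_isFlipAlong]
  rcases hflip with ⟨π, N, hf⟩ | ⟨π, N, hf⟩
  · exact hf.isPolytopeEdge htree.isAcyclic hD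
  · exact (hf.isPolytopeEdge htree.isAcyclic hE).symm (subset_convexHull ℝ _ ⟨D, hD, rfl⟩)
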